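/- In the Tamari lattice on complete binary trees with n internal vertices, if T̄ ≤ T̄' then c(T̄) ⪯ c(T̄'), where ⪯ is the partial order on words of length n−1 over {\\, /} generated by the relations v₁/v₂/…/v_k ≺ v₁\\v₂\\…\\v_k (changing any set of letters / into \\ increases the word). -/
import Mathlib


/-- Complete binary trees: every vertex has 0 or 2 children
(`leaf` = external vertex, `node` = internal vertex). -/
inductive CTree where
  | leaf : CTree
  | node : CTree → CTree → CTree
deriving DecidableEq

/-- The number of internal vertices of a complete binary tree. -/
def isize : CTree → ℕ
  | .leaf => 0
  | .node l r => isize l + isize r + 1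

/-- The sequence of external edges of a complete binary tree, recorded walking clockwise
around it starting at the root: `false` = left external edge (`\`), `true` = right
external edge (`/`). -/
def extSeq : CTree → List Bool
  | .leaf => []
  | .node l r =>
      (if l = CTree.leaf then [false] else extSeq l) ++
      (if r = CTree.leaf then [true] else extSeq r)

/-- The word `c(T̄)` over `{\, /}`: the external edges of `T̄` in clockwise order,
omitting the first and the last ones (`false` = `\`, `true` = `/`). -/
def cword (t : CTree) : List Bool := ((extSeq t).drop 1).dropLast

/-- One-hole contexts, locating a vertex in a complete binary tree. -/
inductive Ctx where
  | hole : Ctx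
  | left : Ctx → CTree → Ctx
  | right : CTree → Ctx → Ctx

/-- Fill the hole of a context with a tree. -/
def Ctx.fill : Ctx → CTree → CTree
  | .hole, t => t
  | .left c r, t => CTree.node (c.fill t) r
  | .right l c, t => CTree.node l (c.fill t)

/-- Right rotation at some internal vertex `s` whose left child `t` is internal, with
`A`, `B` the left and right subtrees of `t` and `C` the right subtree of `s`: after the
rotation, `t` becomes the right child of `s`, `A` the left subtree of `s`, and `B`, `C`
the left and right subtrees of `t`. -/
def RotStep (T T' : CTree) : Prop :=
  ∃ (K : Ctx) (A B C : CTree),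
    T = K.fill (CTree.node (CTree.node A B) C) ∧
    T' = K.fill (CTree.node A (CTree.node B C))

/-- The Tamari order on complete binary trees: the reflexive-transitive closure of the
right-rotation covering relation. -/
def TamariLe : CTree → CTree → Prop := Relation.ReflTransGen RotStep

/-- The order `⪯` on words over `{\, /}` of the same length: `w ⪯ w'` iff `w'` is
obtained from `w` by changing some (possibly empty) set of letters `/` into `\`
(`false` = `\`, `true` = `/`). -/
def WordLe (w w' : List Bool) : Prop :=
  w.length = w'.length ∧
  ∀ i : ℕ, i < w.length → w'.getD i true = true → w.getD i true = true

/-! ### Auxiliary definitions and lemmas -/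

/-- Left-edge contribution of a subtree. -/
def eL (t : CTree) : List Bool := if t = CTree.leaf then [false] else extSeq t

/-- Right-edge contribution of a subtree. -/
def eR (t : CTree) : List Bool := if t = CTree.leaf then [true] else extSeq t

lemma extSeq_node (l r : CTree) : extSeq (CTree.node l r) = eL l ++ eR r := by
  simp [extSeq, eL, eR]

lemma fill_node_ne_leaf (K : Ctx) (a b : CTree) :
    K.fill (CTree.node a b) ≠ CTree.leaf := by
  cases K <;> simp [Ctx.fill]

/-- The external edges contributed by a context, before the hole. -/
def pre : Ctx → List Bool
  | .hole => []
  | .left c _ => pre c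
  | .right l c => eL l ++ pre c

/-- The external edges contributed by a context, after the hole. -/
def post : Ctx → List Bool
  | .hole => []
  | .left c r => post c ++ eR r
  | .right _ c => post c

lemma eL_node (l r : CTree) : eL (CTree.node l r) = eL l ++ eR r := by
  simp [eL, extSeq_node]

lemma eR_node (l r : CTree) : eR (CTree.node l r) = eL l ++ eR r := by
  simp [eR, extSeq_node]

lemma eL_leaf : eL CTree.leaf = [false] := by simp [eL]

lemma eR_leaf : eR CTree.leaf = [true] := by simp [eR]

lemma extSeq_fill (K : Ctx) (a b : CTree) :
    extSeq (K.fill (CTree.node a b)) = pre K ++ extSeq (CTree.node a b) ++ post K := by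
  induction K with
  | hole => simp [Ctx.fill, pre, post]
  | left c r ih =>
      have h := fill_node_ne_leaf c a b
      simp [Ctx.fill, extSeq_node, eL, h, ih, pre, post]
  | right l c ih =>
      have h := fill_node_ne_leaf c a b
      simp [Ctx.fill, extSeq_node, eR, h, ih, pre, post]

/-- Pointwise monotonicity of the full external-edge sequences transfers to `cword`s. -/
lemma wordLe_of_extSeq (T T' : CTree)
    (hlen : (extSeq T).length = (extSeq T').length)
    (hpt : ∀ i : ℕ, (extSeq T').getD i true = true → (extSeq T).getD i true = true) :
    WordLe (cword T) (cword T') := by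
  constructor
  · simp [cword, hlen]
  · intro i hi _hval
    have hi' : i < (extSeq T).length - 1 - 1 := by
      simpa [cword] using hi
    have key : ∀ (L : List Bool), i < L.length - 1 - 1 →
        ((L.drop 1).dropLast).getD i true = L.getD (i + 1) true := by
      intro L hL
      rw [List.getD_eq_getElem?_getD, List.getD_eq_getElem?_getD,
        List.getElem?_dropLast, List.getElem?_drop]
      have : i < (L.drop 1).length - 1 := by simpa using hL
      rw [if_pos this, Nat.add_comm]
    have h1 := key (extSeq T) hi'
    have h2 := key (extSeq T') (by rw [← hlen]; exact hi')
    simp only [cword] at *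
    rw [h1]
    rw [h2] at _hval
    exact hpt (i + 1) _hval

lemma wordLe_refl (w : List Bool) : WordLe w w := ⟨rfl, fun _ _ h => h⟩

lemma wordLe_trans {u v w : List Bool} (h1 : WordLe u v) (h2 : WordLe v w) :
    WordLe u w := by
  obtain ⟨l1, p1⟩ := h1
  obtain ⟨l2, p2⟩ := h2
  exact ⟨l1.trans l2, fun i hi hw => p1 i hi (p2 i (l1 ▸ hi) hw)⟩

lemma rotStep_wordLe {T T' : CTree} (h : RotStep T T') :
    WordLe (cword T) (cword T') := by
  obtain ⟨K, A, B, C, hT, hT'⟩ := h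
  subst hT hT'
  cases B with
  | node b1 b2 =>
      have hc : cword (K.fill (CTree.node (CTree.node A (CTree.node b1 b2)) C)) =
          cword (K.fill (CTree.node A (CTree.node (CTree.node b1 b2) C))) := by
        simp [cword, extSeq_fill, extSeq_node, eL_node, eR_node, List.append_assoc]
      rw [hc]; exact wordLe_refl _
  | leaf =>
      apply wordLe_of_extSeq
      · simp [extSeq_fill, extSeq_node, eL_node, eR_node, eL_leaf, eR_leaf]
      · intro i
        simp only [extSeq_fill, extSeq_node, eL_node, eR_node, eL_leaf, eR_leaf]
        -- LHS tree: pre K ++ ((eL A ++ [true]) ++ eR C) ++ post K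
        -- RHS tree: pre K ++ (eL A ++ ([false] ++ eR C)) ++ post K
        set P := pre K with hP
        set Q := post K with hQ
        set X := eL A with hX
        set Z := eR C with hZ
        have e1 : P ++ ((X ++ [true]) ++ Z) ++ Q = (P ++ X) ++ true :: (Z ++ Q) := by
          simp [List.append_assoc]
        have e2 : P ++ (X ++ ([false] ++ Z)) ++ Q = (P ++ X) ++ false :: (Z ++ Q) := by
          simp [List.append_assoc]
        rw [e1, e2]
        intro hv
        rw [List.getD_eq_getElem?_getD] at hv ⊢
        rcases lt_trichotomy i (P ++ X).length with hlt | heq | hgt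
        · rw [List.getElem?_append_left hlt] at hv ⊢; exact hv
        · exfalso
          rw [List.getElem?_append_right (le_of_eq heq.symm)] at hv
          simp [heq] at hv
        · rw [List.getElem?_append_right (le_of_lt hgt)] at hv ⊢
          have : i - (P ++ X).length ≠ 0 := by omega
          obtain ⟨j, hj⟩ := Nat.exists_eq_succ_of_ne_zero this
          rw [hj] at hv ⊢
          simpa using hv

/-- **Corollary 8.** In the Tamari lattice on complete binary trees, if `T̄ ≤ T̄'`
then `c(T̄) ⪯ c(T̄')`. -/
theorem canopy_monotone (T T' : CTree) (h : TamariLe T T') :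
    WordLe (cword T) (cword T') := by
  induction h with
  | refl => exact wordLe_refl _
  | tail _step hstep ih => exact wordLe_trans ih (rotStep_wordLe hstep)
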